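/- Let a = (a_n) ∈ {0,2}^ℕ and u = (u_n) ∈ Θ (sequences in {0,2,−2}^ℕ whose first nonzero entry is not −2 and which do not end with 2(−2)^∞ or (−2)2^∞). Suppose (a,u) ∉ Γ', where Γ' consists of pairs with some k ≥ 0 such that (σ^k a, σ^k u) = (20^∞, 02^∞) or (02^∞, 0(−2)^∞). If Σ_n a_n 3^{-n} − Σ_n u_n 3^{-n} ∈ C (the middle-third Cantor set), then a_n − u_n ∈ {0,2} for all n. -/

import Mathlib

/-- The middle-third Cantor set. -/
def cantorC : Set ℝ :=
  {x | ∃ ε : ℕ → ℝ, (∀ n, ε n = 0 ∨ ε n = 2) ∧ x = ∑' n : ℕ, ε n / 3 ^ (n + 1)}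

/-- Membership in Θ: values in {0,2,-2}, the first nonzero entry is not -2,
and the sequence does not end with 2(-2)^∞ or (-2)2^∞. -/
def inTheta (u : ℕ → ℝ) : Prop :=
  (∀ n, u n = 0 ∨ u n = 2 ∨ u n = -2) ∧
  (∀ n, (∀ k < n, u k = 0) → u n ≠ -2) ∧
  (¬ ∃ k, u k = 2 ∧ ∀ j > k, u j = -2) ∧
  (¬ ∃ k, u k = -2 ∧ ∀ j > k, u j = 2)

private lemma sumaux {x : ℕ → ℝ} {B : ℝ} (hx : ∀ n, |x n| ≤ B) :
    Summable (fun n => x n / 3 ^ (n + 1)) := by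
  have hg : Summable (fun n : ℕ => B * (1 / 3 : ℝ) ^ (n + 1)) :=
    (summable_nat_add_iff 1).mpr
      ((summable_geometric_of_lt_one (r := 1/3) (by norm_num) (by norm_num)).mul_left B)
  refine Summable.of_norm_bounded hg fun n => ?_
  have h3 : (0:ℝ) < 3 ^ (n + 1) := by positivity
  rw [Real.norm_eq_abs, abs_div, abs_of_pos h3, div_pow, one_pow, mul_one_div]
  gcongr
  exact hx n

private lemma tail_hasSum (k : ℕ) :
    HasSum (fun n : ℕ => (4:ℝ) / 3 ^ (n + k + 2)) (2 / 3 ^ (k + 1)) := by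
  have h := (hasSum_geometric_of_lt_one (show (0:ℝ) ≤ 1/3 by norm_num)
      (by norm_num)).mul_left ((4:ℝ) / 3 ^ (k + 2))
  have heq : (fun n : ℕ => (4:ℝ) / 3 ^ (k + 2) * (1/3) ^ n)
      = fun n : ℕ => (4:ℝ) / 3 ^ (n + k + 2) := by
    funext n
    rw [show n + k + 2 = n + (k + 2) from rfl, pow_add, div_pow, one_pow]
    ring
  rw [heq] at h
  convert h using 1
  · rfl
  rw [pow_succ]
  norm_num
  ring

private lemma pt_m4 {A U E : ℝ} (hA : A = 0 ∨ A = 2) (hU : U = 0 ∨ U = 2 ∨ U = -2)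
    (hE : E = 0 ∨ E = 2) (h : A - U - E = -4) : A = 0 ∧ U = 2 := by
  rcases hA with rfl|rfl <;> rcases hU with rfl|rfl|rfl <;> rcases hE with rfl|rfl <;>
    first | exact ⟨rfl, rfl⟩ | norm_num at h

private lemma pt_4 {A U E : ℝ} (hA : A = 0 ∨ A = 2) (hU : U = 0 ∨ U = 2 ∨ U = -2)
    (hE : E = 0 ∨ E = 2) (h : A - U - E = 4) : A = 2 ∧ U = -2 := by
  rcases hA with rfl|rfl <;> rcases hU with rfl|rfl|rfl <;> rcases hE with rfl|rfl <;>
    first | exact ⟨rfl, rfl⟩ | norm_num at h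

private lemma pt_2 {A U E : ℝ} (hA : A = 0 ∨ A = 2) (hU : U = 0 ∨ U = 2 ∨ U = -2)
    (hE : E = 0 ∨ E = 2) (h : A - U - E = 2) : (A = 2 ∧ U = 0) ∨ U = -2 := by
  rcases hA with rfl|rfl <;> rcases hU with rfl|rfl|rfl <;> rcases hE with rfl|rfl <;>
    first | exact Or.inl ⟨rfl, rfl⟩ | exact Or.inr rfl | norm_num at h

private lemma pt_m2 {A U E : ℝ} (hA : A = 0 ∨ A = 2) (hU : U = 0 ∨ U = 2 ∨ U = -2)
    (hE : E = 0 ∨ E = 2) (h : A - U - E = -2) : (A = 0 ∧ U = 0) ∨ U = 2 := by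
  rcases hA with rfl|rfl <;> rcases hU with rfl|rfl|rfl <;> rcases hE with rfl|rfl <;>
    first | exact Or.inl ⟨rfl, rfl⟩ | exact Or.inr rfl | norm_num at h

private lemma pt_bdd {A U E : ℝ} (hA : A = 0 ∨ A = 2) (hU : U = 0 ∨ U = 2 ∨ U = -2)
    (hE : E = 0 ∨ E = 2) : |A - U - E| ≤ 4 := by
  rcases hA with rfl|rfl <;> rcases hU with rfl|rfl|rfl <;> rcases hE with rfl|rfl <;> norm_num

private lemma pt_ne {A U E : ℝ} (hA : A = 0 ∨ A = 2) (hU : U = 0 ∨ U = 2 ∨ U = -2)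
    (hE : E = 0 ∨ E = 2) (h0 : A - U - E ≠ 0) (h2 : |A - U - E| ≤ 2) :
    A - U - E = 2 ∨ A - U - E = -2 := by
  rcases hA with rfl|rfl <;> rcases hU with rfl|rfl|rfl <;> rcases hE with rfl|rfl <;>
    norm_num at *

theorem stmt_8 (a u : ℕ → ℝ)
    (ha : ∀ n, a n = 0 ∨ a n = 2)
    (hu : inTheta u)
    (hΓ' : ¬ ∃ k : ℕ,
      (a k = 2 ∧ u k = 0 ∧ ∀ j > k, a j = 0 ∧ u j = 2) ∨
      (a k = 0 ∧ u k = 0 ∧ ∀ j > k, a j = 2 ∧ u j = -2))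
    (hsum : (∑' n : ℕ, a n / 3 ^ (n + 1)) - (∑' n : ℕ, u n / 3 ^ (n + 1)) ∈ cantorC) :
    ∀ n, a n - u n = 0 ∨ a n - u n = 2 := by
  classical
  obtain ⟨ε, hε, hxeq⟩ := hsum
  set c : ℕ → ℝ := fun n => a n - u n - ε n with hc
  have hA2 : ∀ n, |a n| ≤ 2 := fun n => by rcases ha n with h|h <;> rw [h] <;> norm_num
  have hU2 : ∀ n, |u n| ≤ 2 := fun n => by rcases hu.1 n with h|h|h <;> rw [h] <;> norm_num
  have hE2 : ∀ n, |ε n| ≤ 2 := fun n => by rcases hε n with h|h <;> rw [h] <;> norm_num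
  have hsa := sumaux hA2
  have hsu := sumaux hU2
  have hse := sumaux hE2
  have hkey : (fun n => c n / 3 ^ (n+1))
      = fun n => (a n / 3 ^ (n+1) - u n / 3 ^ (n+1)) - ε n / 3 ^ (n+1) := by
    funext n; simp only [hc]; ring
  have hsc : Summable (fun n => c n / 3 ^ (n+1)) := by
    rw [hkey]; exact (hsa.sub hsu).sub hse
  have hcsum : ∑' n, c n / 3 ^ (n+1) = 0 := by
    rw [hkey, Summable.tsum_sub (hsa.sub hsu) hse, Summable.tsum_sub hsa hsu, hxeq, sub_self]
  have htpos : ∀ m : ℕ, (0:ℝ) < 3 ^ m := fun m => by positivity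
  have hbdd : ∀ n, |c n| ≤ 4 := fun n => pt_bdd (ha n) (hu.1 n) (hε n)
  have hczero : ∀ n, c n = 0 := by
    by_contra hne
    push_neg at hne
    have hex : ∃ n, c n ≠ 0 := hne
    set k := Nat.find hex with hkdef
    have hk : c k ≠ 0 := Nat.find_spec hex
    have hmin : ∀ j, j < k → c j = 0 := fun j hj => not_not.mp (Nat.find_min hex hj)
    set f : ℕ → ℝ := fun n => c n / 3 ^ (n + 1) with hfdef
    have hsplit := Summable.sum_add_tsum_nat_add (f := f) (k+1) hsc
    have hsum0 : ∑ i ∈ Finset.range (k+1), f i = f k := by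
      rw [Finset.sum_range_succ, Finset.sum_eq_zero, zero_add]
      intro i hi
      simp [hfdef, hmin i (Finset.mem_range.mp hi)]
    have hT : f k + ∑' n, f (n + (k+1)) = 0 := by
      rw [← hsum0, hsplit]; exact hcsum
    have hftail : Summable (fun n => f (n + (k+1))) := (summable_nat_add_iff (k+1)).mpr hsc
    have hgeo := tail_hasSum k
    have habsle : ∀ n, ‖f (n + (k+1))‖ ≤ 4 / 3 ^ (n + k + 2) := by
      intro n
      show |c (n + k + 1) / 3 ^ (n + k + 2)| ≤ _
      rw [abs_div, abs_of_pos (htpos _)]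
      gcongr
      exact hbdd _
    have hTabs : |∑' n, f (n + (k+1))| ≤ 2 / 3 ^ (k+1) := by
      calc |∑' n, f (n + (k+1))| ≤ ∑' n, ‖f (n + (k+1))‖ := by
              rw [← Real.norm_eq_abs]; exact norm_tsum_le_tsum_norm hftail.norm
        _ ≤ ∑' n, 4 / 3 ^ (n + k + 2) := Summable.tsum_le_tsum habsle hftail.norm hgeo.summable
        _ = 2 / 3 ^ (k+1) := hgeo.tsum_eq
    have hck2 : |c k| ≤ 2 := by
      have h1 : |f k| ≤ 2 / 3 ^ (k+1) := by
        have : f k = - ∑' n, f (n + (k+1)) := by linarith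
        rw [this, abs_neg]; exact hTabs
      have h2 : |c k| / 3 ^ (k+1) ≤ 2 / 3 ^ (k+1) := by
        rwa [show f k = c k / 3 ^ (k+1) from rfl, abs_div, abs_of_pos (htpos _)] at h1
      exact (div_le_div_iff_of_pos_right (htpos (k+1))).mp h2
    rcases pt_ne (ha k) (hu.1 k) (hε k) hk hck2 with hck | hck
    · -- c k = 2 : tail is all -4, i.e. a = 0, u = 2 beyond k
      have hTval : ∑' n, f (n + (k+1)) = -(2 / 3 ^ (k+1)) := by
        have hfk : f k = 2 / 3 ^ (k+1) := by
          show (a k - u k - ε k) / 3 ^ (k+1) = _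
          rw [hck]
        linarith
      have hFs : Summable (fun n => f (n + (k+1)) + 4 / 3 ^ (n + k + 2)) :=
        hftail.add hgeo.summable
      have hFsum : ∑' n, (f (n + (k+1)) + 4 / 3 ^ (n + k + 2)) = 0 := by
        rw [Summable.tsum_add hftail hgeo.summable, hTval, hgeo.tsum_eq]; ring
      have hFnn : ∀ n, 0 ≤ f (n + (k+1)) + 4 / 3 ^ (n + k + 2) := by
        intro n
        show 0 ≤ c (n + k + 1) / 3 ^ (n + k + 2) + 4 / 3 ^ (n + k + 2)
        rw [← add_div]
        apply div_nonneg _ (le_of_lt (htpos _))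
        linarith [(abs_le.mp (hbdd (n + k + 1))).1]
      have hF : ∀ n, c (n + k + 1) = -4 := by
        intro n
        have h0 : f (n + (k+1)) + 4 / 3 ^ (n + k + 2) = 0 :=
          le_antisymm (hFsum ▸ Summable.le_tsum hFs n fun j _ => hFnn j) (hFnn n)
        have h1 : (c (n + k + 1) + 4) / 3 ^ (n + k + 2) = 0 := by
          rw [add_div]; exact h0
        have := (div_eq_zero_iff.mp h1).resolve_right (ne_of_gt (htpos _))
        linarith
      have htail : ∀ j, k < j → a j = 0 ∧ u j = 2 := by
        intro j hj
        have hcj : c j = -4 := by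
          have := hF (j - (k+1))
          rwa [show j - (k+1) + k + 1 = j by omega] at this
        exact pt_m4 (ha j) (hu.1 j) (hε j) hcj
      rcases pt_2 (ha k) (hu.1 k) (hε k) hck with ⟨h1, h2⟩ | h2
      · exact hΓ' ⟨k, Or.inl ⟨h1, h2, fun j hj => htail j hj⟩⟩
      · exact hu.2.2.2 ⟨k, h2, fun j hj => (htail j hj).2⟩
    · -- c k = -2 : tail is all 4, i.e. a = 2, u = -2 beyond k
      have hTval : ∑' n, f (n + (k+1)) = 2 / 3 ^ (k+1) := by
        have hfk : f k = -(2 / 3 ^ (k+1)) := by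
          show (a k - u k - ε k) / 3 ^ (k+1) = _
          rw [hck]; ring
        linarith
      have hFs : Summable (fun n => 4 / 3 ^ (n + k + 2) - f (n + (k+1))) :=
        hgeo.summable.sub hftail
      have hFsum : ∑' n, (4 / 3 ^ (n + k + 2) - f (n + (k+1))) = 0 := by
        rw [Summable.tsum_sub hgeo.summable hftail, hTval, hgeo.tsum_eq]; ring
      have hFnn : ∀ n, 0 ≤ 4 / 3 ^ (n + k + 2) - f (n + (k+1)) := by
        intro n
        show 0 ≤ 4 / 3 ^ (n + k + 2) - c (n + k + 1) / 3 ^ (n + k + 2)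
        rw [div_sub_div_same]
        apply div_nonneg _ (le_of_lt (htpos _))
        linarith [(abs_le.mp (hbdd (n + k + 1))).2]
      have hF : ∀ n, c (n + k + 1) = 4 := by
        intro n
        have h0 : 4 / 3 ^ (n + k + 2) - f (n + (k+1)) = 0 :=
          le_antisymm (hFsum ▸ Summable.le_tsum hFs n fun j _ => hFnn j) (hFnn n)
        have h1 : (4 - c (n + k + 1)) / 3 ^ (n + k + 2) = 0 := by
          rw [sub_div]; exact h0
        have := (div_eq_zero_iff.mp h1).resolve_right (ne_of_gt (htpos _))
        linarith
      have htail : ∀ j, k < j → a j = 2 ∧ u j = -2 := by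
        intro j hj
        have hcj : c j = 4 := by
          have := hF (j - (k+1))
          rwa [show j - (k+1) + k + 1 = j by omega] at this
        exact pt_4 (ha j) (hu.1 j) (hε j) hcj
      rcases pt_m2 (ha k) (hu.1 k) (hε k) hck with ⟨h1, h2⟩ | h2
      · exact hΓ' ⟨k, Or.inr ⟨h1, h2, fun j hj => htail j hj⟩⟩
      · exact hu.2.2.1 ⟨k, h2, fun j hj => (htail j hj).2⟩
  intro n
  have h0 := hczero n
  have : a n - u n = ε n := by simp only [hc] at h0; linarith
  rw [this]
  exact hε n
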